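/- Fix an m×n complex matrix K. The map (A, B) ↦ Tr(K* (A log A) K − K* A K (log B)), defined for positive definite m×m matrices A and positive definite n×n matrices B, is jointly convex: for positive definite A₁, A₂, B₁, B₂ and t ∈ [0,1], its value at (tA₁+(1−t)A₂, tB₁+(1−t)B₂) is at most t times its value at (A₁,B₁) plus (1−t) times its value at (A₂,B₂). -/

import Mathlib

/-!
Expand everything in eigenbases `A = U diag(λ) U*`, `B = V diag(μ) V*` and put
`w i j = |(U* K V) i j|²`. Then the trace equals `∑ w i j (λ i log λ i - λ i log μ j)`, and the
scalar identity `a log a - a log b = ∫₀^∞ ((1/(1+s) - 1/s) a + a² / (s (a + s b))) ds` turns it into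
`∫₀^∞ ((1/(1+s) - 1/s) Tr (K* A K) + s⁻¹ ⟪A K, L⁻¹ (A K)⟫) ds`, where `L Z = A Z + s Z B` is the
Sylvester operator, diagonal in the eigenbases with entries `λ i + s μ j`. The first term is linear
in `A`, and `⟪A K, L⁻¹ (A K)⟫ = sup_Z (2 Re ⟪Z, A K⟫ - ⟪Z, L Z⟫)` is a supremum of functions
that are linear in `(A, B)`, hence jointly convex. Integrating in `s` preserves convexity.
-/

open Matrix
open scoped ComplexOrder

/-- `matFun f A` is `f(A)` for a Hermitian matrix `A`, defined via the spectral
decomposition `A = U diag(λ) U*` as `U diag(f(λ)) U*` (and junk value `0` otherwise). -/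
noncomputable def matFun {n : Type*} [Fintype n] [DecidableEq n]
    (f : ℝ → ℝ) (A : Matrix n n ℂ) : Matrix n n ℂ :=
  if hA : A.IsHermitian then
    (hA.eigenvectorUnitary : Matrix n n ℂ) *
      Matrix.diagonal (fun i => (f (hA.eigenvalues i) : ℂ)) *
      star (hA.eigenvectorUnitary : Matrix n n ℂ)
  else 0

open MeasureTheory Set Filter Complex
open scoped Topology

theorem two_mul_re_star_mul_sub_le {d : ℝ} (hd : 0 < d) (z w : ℂ) :
    2 * (star z * w).re - d * normSq z ≤ normSq w / d := by
  rw [le_div_iff₀ hd]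
  simp only [normSq_apply, star_def, mul_re, conj_re, conj_im]
  nlinarith [sq_nonneg (d * z.re - w.re), sq_nonneg (d * z.im - w.im)]

theorem two_mul_re_star_div_mul_sub (d : ℝ) (w : ℂ) :
    2 * (star (w / d) * w).re - d * normSq (w / d) = normSq w / d := by
  rw [star_div₀, star_def, conj_ofReal, div_mul_eq_mul_div, ← normSq_eq_conj_mul_self,
    normSq_div, normSq_ofReal, div_ofReal_re, ofReal_re]
  rcases eq_or_ne d 0 with rfl | hd
  · simp
  field_simp
  ring

theorem re_star_mul_self (z : ℂ) : (star z * z).re = normSq z := by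
  rw [star_def, ← normSq_eq_conj_mul_self, ofReal_re]

noncomputable def entropyKernel (a b s : ℝ) : ℝ := a * (a - b) / ((1 + s) * (a + s * b))

theorem entropyKernel_eq {a b s : ℝ} (ha : 0 < a) (hb : 0 ≤ b) (hs : 0 < s) :
    entropyKernel a b s = (1 / (1 + s) - 1 / s) * a + a ^ 2 / (a + s * b) / s := by
  have : 0 < a + s * b := by positivity
  unfold entropyKernel
  field_simp
  ring

theorem hasDerivAt_entropyKernel_primitive {a b x : ℝ} (ha : 0 < a) (hb : 0 < b) (hx : 0 ≤ x) :
    HasDerivAt (fun s => a * (Real.log (1 + s) - Real.log (a + s * b)))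
      (entropyKernel a b x) x := by
  have h1 : 0 < 1 + x := by positivity
  have h2 : 0 < a + x * b := by positivity
  have := ((((hasDerivAt_id' x).const_add 1).log h1.ne').sub
    ((((hasDerivAt_id' x).mul_const b).const_add a).log h2.ne')).const_mul a
  refine this.congr_deriv ?_
  unfold entropyKernel
  field_simp
  ring

theorem tendsto_entropyKernel_primitive {a b : ℝ} (ha : 0 < a) (hb : 0 < b) :
    Tendsto (fun s => a * (Real.log (1 + s) - Real.log (a + s * b))) atTop
      (𝓝 (-(a * Real.log b))) := by
  have hquot : Tendsto (fun s : ℝ => (1 + s) / (a + s * b)) atTop (𝓝 b⁻¹) := by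
    have h : Tendsto (fun s : ℝ => (s⁻¹ + 1) / (a * s⁻¹ + b)) atTop (𝓝 ((0 + 1) / (a * 0 + b))) :=
      (tendsto_inv_atTop_zero.add_const 1).div (tendsto_inv_atTop_zero.const_mul a |>.add_const b)
        (by simpa using hb.ne')
    refine (tendsto_congr' ?_).1 (by simpa using h)
    filter_upwards [eventually_gt_atTop 0] with s hs
    field_simp
  have hlog := ((Real.continuousAt_log (inv_pos.2 hb).ne').tendsto.comp hquot).const_mul a
  rw [Real.log_inv, mul_neg] at hlog
  refine (tendsto_congr' ?_).1 hlog
  filter_upwards [eventually_gt_atTop 0] with s hs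
  simp only [Function.comp_apply]
  rw [Real.log_div (by positivity) (by positivity)]

theorem integrableOn_entropyKernel {a b : ℝ} (ha : 0 < a) (hb : 0 < b) :
    IntegrableOn (entropyKernel a b) (Ioi 0) := by
  have hderiv x (hx : x ∈ Ici (0 : ℝ)) := hasDerivAt_entropyKernel_primitive ha hb hx
  have hden {x : ℝ} (hx : x ∈ Ioi (0 : ℝ)) : 0 < (1 + x) * (a + x * b) := by
    have : (0 : ℝ) < x := hx
    positivity
  rcases le_or_gt b a with hba | hab
  · refine integrableOn_Ioi_deriv_of_nonneg' hderiv (fun x hx => ?_)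
      (tendsto_entropyKernel_primitive ha hb)
    exact div_nonneg (mul_nonneg ha.le (sub_nonneg.2 hba)) (hden hx).le
  · refine integrableOn_Ioi_deriv_of_nonpos' hderiv (fun x hx => ?_)
      (tendsto_entropyKernel_primitive ha hb)
    exact div_nonpos_of_nonpos_of_nonneg (mul_nonpos_of_nonneg_of_nonpos ha.le (by linarith))
      (hden hx).le

theorem integral_entropyKernel {a b : ℝ} (ha : 0 < a) (hb : 0 < b) :
    ∫ s in Ioi 0, entropyKernel a b s = a * Real.log a - a * Real.log b := by
  rw [integral_Ioi_of_hasDerivAt_of_tendsto'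
    (fun x hx => hasDerivAt_entropyKernel_primitive ha hb hx) (integrableOn_entropyKernel ha hb)
    (tendsto_entropyKernel_primitive ha hb)]
  simp only [add_zero, Real.log_one, zero_mul, zero_sub]
  ring

theorem convexOn_integral {E α : Type*} [AddCommGroup E] [Module ℝ E] [MeasurableSpace α]
    {μ : Measure α} {S : Set E} {g : E → α → ℝ} (hS : Convex ℝ S)
    (hg : ∀ᵐ a ∂μ, ConvexOn ℝ S (g · a)) (hint : ∀ x ∈ S, Integrable (g x) μ) :
    ConvexOn ℝ S (fun x => ∫ a, g x a ∂μ) := by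
  refine ⟨hS, fun x hx y hy a b ha hb hab => ?_⟩
  calc ∫ s, g (a • x + b • y) s ∂μ
      ≤ ∫ s, (a * g x s + b * g y s) ∂μ :=
        integral_mono_ae (hint _ (hS hx hy ha hb hab))
          (((hint x hx).const_mul a).add ((hint y hy).const_mul b))
          (hg.mono fun s hs => hs.2 hx hy ha hb hab)
    _ = a * ∫ s, g x s ∂μ + b * ∫ s, g y s ∂μ := by
        rw [integral_add ((hint x hx).const_mul a) ((hint y hy).const_mul b), integral_const_mul,
          integral_const_mul]

theorem convex_setOf_posDef {n 𝕜 : Type*} [Fintype n] [RCLike 𝕜] :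
    Convex ℝ {A : Matrix n n 𝕜 | A.PosDef} :=
  convex_iff_forall_pos.2 fun _ hA _ hB _ _ ha hb _ => (hA.smul ha).add (hB.smul hb)

theorem convex_setOf_posSemidef {n 𝕜 : Type*} [Fintype n] [RCLike 𝕜] :
    Convex ℝ {A : Matrix n n 𝕜 | A.PosSemidef} :=
  fun _ hA _ hB _ _ ha hb _ => (hA.smul ha).add (hB.smul hb)

section

variable {m n : Type*} [Fintype m] [Fintype n]

theorem trace_conjTranspose_mul_conj_mul_conj (X Y : Matrix m n ℂ) (U D : Matrix m m ℂ)
    (V E : Matrix n n ℂ) :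
    (Xᴴ * (U * D * Uᴴ) * Y * (V * E * Vᴴ)).trace =
      ((Uᴴ * X * V)ᴴ * D * (Uᴴ * Y * V) * E).trace := by
  simp only [conjTranspose_mul, conjTranspose_conjTranspose, Matrix.mul_assoc]
  rw [trace_mul_comm Vᴴ]
  simp only [Matrix.mul_assoc]

theorem re_trace_conjTranspose_mul_smul_add_smul_mul (K : Matrix m n ℂ) (a b : ℝ)
    (A₁ A₂ : Matrix m m ℂ) :
    (Kᴴ * (a • A₁ + b • A₂) * K).trace.re =
      a * (Kᴴ * A₁ * K).trace.re + b * (Kᴴ * A₂ * K).trace.re := by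
  simp only [Matrix.mul_add, Matrix.add_mul, Matrix.mul_smul, Matrix.smul_mul, trace_add,
    trace_smul, add_re, smul_re, smul_eq_mul]

noncomputable def sylvesterVariational (K : Matrix m n ℂ) (s : ℝ) (A : Matrix m m ℂ)
    (B : Matrix n n ℂ) (Z : Matrix m n ℂ) : ℝ :=
  2 * (Zᴴ * A * K).trace.re - (Zᴴ * A * Z).trace.re - s * (Zᴴ * Z * B).trace.re

noncomputable def sylvesterInverseForm (K : Matrix m n ℂ) (s : ℝ) (A : Matrix m m ℂ)
    (B : Matrix n n ℂ) : ℝ :=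
  ⨆ Z, sylvesterVariational K s A B Z

theorem sylvesterVariational_smul_add_smul (K Z : Matrix m n ℂ) (s a b : ℝ)
    (A₁ A₂ : Matrix m m ℂ) (B₁ B₂ : Matrix n n ℂ) :
    sylvesterVariational K s (a • A₁ + b • A₂) (a • B₁ + b • B₂) Z =
      a * sylvesterVariational K s A₁ B₁ Z + b * sylvesterVariational K s A₂ B₂ Z := by
  simp only [sylvesterVariational, Matrix.mul_add, Matrix.add_mul, Matrix.mul_smul,
    Matrix.smul_mul, trace_add, trace_smul, add_re, smul_re, smul_eq_mul]
  ring

variable [DecidableEq m] [DecidableEq n]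

theorem trace_conjTranspose_mul_diagonal_mul_mul_diagonal (P Q : Matrix m n ℂ) (d : m → ℂ)
    (e : n → ℂ) :
    (Pᴴ * diagonal d * Q * diagonal e).trace =
      ∑ p : m × n, star (P p.1 p.2) * d p.1 * Q p.1 p.2 * e p.2 := by
  rw [Fintype.sum_prod_type_right]
  simp only [trace, diag, mul_apply, diagonal_apply, conjTranspose_apply, mul_ite, mul_zero,
    Finset.sum_ite_eq', Finset.mem_univ, if_true, Finset.sum_mul]

theorem Matrix.IsHermitian.matFun_eq {A : Matrix n n ℂ} (hA : A.IsHermitian) (f : ℝ → ℝ) :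
    matFun f A = (hA.eigenvectorUnitary : Matrix n n ℂ) *
      diagonal (fun i => (f (hA.eigenvalues i) : ℂ)) * (hA.eigenvectorUnitary : Matrix n n ℂ)ᴴ := by
  rw [matFun, dif_pos hA, star_eq_conjTranspose]

theorem Matrix.IsHermitian.matFun_eq_cfc {A : Matrix n n ℂ} (hA : A.IsHermitian) (f : ℝ → ℝ) :
    matFun f A = cfc f A := by
  rw [hA.cfc_eq, IsHermitian.cfc, matFun, dif_pos hA, Unitary.conjStarAlgAut_apply]
  rfl

theorem Matrix.IsHermitian.matFun_id {A : Matrix n n ℂ} (hA : A.IsHermitian) :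
    matFun id A = A := by
  rw [hA.matFun_eq_cfc]
  exact cfc_id ℝ A hA.isSelfAdjoint

theorem Matrix.IsHermitian.matFun_one {A : Matrix n n ℂ} (hA : A.IsHermitian) :
    matFun 1 A = 1 := by
  rw [hA.matFun_eq_cfc, Pi.one_def, cfc_const_one ℝ A]

noncomputable def eigenCoords {A : Matrix m m ℂ} {B : Matrix n n ℂ} (hA : A.IsHermitian)
    (hB : B.IsHermitian) (X : Matrix m n ℂ) : Matrix m n ℂ :=
  (hA.eigenvectorUnitary : Matrix m m ℂ)ᴴ * X * (hB.eigenvectorUnitary : Matrix n n ℂ)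

variable {A : Matrix m m ℂ} {B : Matrix n n ℂ}

theorem eigenCoords_conj (hA : A.IsHermitian) (hB : B.IsHermitian) (Y : Matrix m n ℂ) :
    eigenCoords hA hB ((hA.eigenvectorUnitary : Matrix m m ℂ) * Y *
      (hB.eigenvectorUnitary : Matrix n n ℂ)ᴴ) = Y := by
  simp only [eigenCoords, ← star_eq_conjTranspose, Matrix.mul_assoc, Unitary.coe_star_mul_self,
    Matrix.mul_one]
  simp only [← Matrix.mul_assoc, Unitary.coe_star_mul_self, Matrix.one_mul]

theorem re_trace_mul_matFun_mul_matFun (hA : A.IsHermitian) (hB : B.IsHermitian) (f g : ℝ → ℝ)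
    (X Y : Matrix m n ℂ) :
    (Xᴴ * matFun f A * Y * matFun g B).trace.re =
      ∑ p : m × n, f (hA.eigenvalues p.1) * g (hB.eigenvalues p.2) *
        (star (eigenCoords hA hB X p.1 p.2) * eigenCoords hA hB Y p.1 p.2).re := by
  rw [hA.matFun_eq, hB.matFun_eq, trace_conjTranspose_mul_conj_mul_conj,
    trace_conjTranspose_mul_diagonal_mul_mul_diagonal, re_sum]
  refine Finset.sum_congr rfl fun p _ => ?_
  rw [eigenCoords, eigenCoords, ← re_ofReal_mul]
  push_cast
  ring_nf

noncomputable def relEntropyTrace (K : Matrix m n ℂ) (A : Matrix m m ℂ) (B : Matrix n n ℂ) : ℝ :=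
  (Kᴴ * matFun (fun x => x * Real.log x) A * K - Kᴴ * A * K * matFun Real.log B).trace.re

theorem relEntropyTrace_eq_sum (K : Matrix m n ℂ) (hA : A.IsHermitian) (hB : B.IsHermitian) :
    relEntropyTrace K A B = ∑ p : m × n,
      (hA.eigenvalues p.1 * Real.log (hA.eigenvalues p.1) -
        hA.eigenvalues p.1 * Real.log (hB.eigenvalues p.2)) *
        normSq (eigenCoords hA hB K p.1 p.2) := by
  have hfirst : Kᴴ * matFun (fun x => x * Real.log x) A * K =
      Kᴴ * matFun (fun x => x * Real.log x) A * K * matFun 1 B := by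
    rw [hB.matFun_one, Matrix.mul_one]
  have hsecond : Kᴴ * A * K * matFun Real.log B = Kᴴ * matFun id A * K * matFun Real.log B := by
    rw [hA.matFun_id]
  rw [relEntropyTrace, hfirst, hsecond, trace_sub, sub_re,
    re_trace_mul_matFun_mul_matFun hA hB, re_trace_mul_matFun_mul_matFun hA hB,
    ← Finset.sum_sub_distrib]
  refine Finset.sum_congr rfl fun p _ => ?_
  simp only [re_star_mul_self, Pi.one_apply, id]
  ring

theorem re_trace_conjTranspose_mul_mul_eq_sum (K : Matrix m n ℂ) (hA : A.IsHermitian)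
    (hB : B.IsHermitian) :
    (Kᴴ * A * K).trace.re =
      ∑ p : m × n, hA.eigenvalues p.1 * normSq (eigenCoords hA hB K p.1 p.2) := by
  have h : Kᴴ * A * K = Kᴴ * matFun id A * K * matFun 1 B := by
    rw [hA.matFun_id, hB.matFun_one, Matrix.mul_one]
  rw [h, re_trace_mul_matFun_mul_matFun hA hB]
  simp only [re_star_mul_self, Pi.one_apply, id, mul_one]

theorem sylvesterVariational_eq_sum (K Z : Matrix m n ℂ) (s : ℝ) (hA : A.IsHermitian)
    (hB : B.IsHermitian) :
    sylvesterVariational K s A B Z = ∑ p : m × n,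
      (2 * (star (eigenCoords hA hB Z p.1 p.2) *
          (hA.eigenvalues p.1 * eigenCoords hA hB K p.1 p.2)).re -
        (hA.eigenvalues p.1 + s * hB.eigenvalues p.2) * normSq (eigenCoords hA hB Z p.1 p.2)) := by
  have hAK : Zᴴ * A * K = Zᴴ * matFun id A * K * matFun 1 B := by
    rw [hA.matFun_id, hB.matFun_one, Matrix.mul_one]
  have hAZ : Zᴴ * A * Z = Zᴴ * matFun id A * Z * matFun 1 B := by
    rw [hA.matFun_id, hB.matFun_one, Matrix.mul_one]
  have hZB : Zᴴ * Z * B = Zᴴ * matFun 1 A * Z * matFun id B := by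
    rw [hA.matFun_one, hB.matFun_id, Matrix.mul_one]
  rw [sylvesterVariational, hAK, hAZ, hZB]
  simp only [re_trace_mul_matFun_mul_matFun hA hB, Finset.mul_sum, ← Finset.sum_sub_distrib]
  refine Finset.sum_congr rfl fun p _ => ?_
  simp only [re_star_mul_self, Pi.one_apply, id, mul_left_comm _ (hA.eigenvalues p.1 : ℂ),
    re_ofReal_mul]
  ring

theorem isGreatest_range_sylvesterVariational (K : Matrix m n ℂ) {s : ℝ} (hA : A.PosDef)
    (hB : B.PosSemidef) (hs : 0 ≤ s) :
    IsGreatest (range (sylvesterVariational K s A B)) (∑ p : m × n,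
      hA.isHermitian.eigenvalues p.1 ^ 2 /
          (hA.isHermitian.eigenvalues p.1 + s * hB.isHermitian.eigenvalues p.2) *
        normSq (eigenCoords hA.isHermitian hB.isHermitian K p.1 p.2)) := by
  set lam := hA.isHermitian.eigenvalues
  set mu := hB.isHermitian.eigenvalues
  set Kt := eigenCoords hA.isHermitian hB.isHermitian K
  have hden (p : m × n) : 0 < lam p.1 + s * mu p.2 :=
    add_pos_of_pos_of_nonneg (hA.eigenvalues_pos _) (mul_nonneg hs (hB.eigenvalues_nonneg _))
  have hterm (p : m × n) : lam p.1 ^ 2 / (lam p.1 + s * mu p.2) * normSq (Kt p.1 p.2) =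
      normSq (lam p.1 * Kt p.1 p.2) / (lam p.1 + s * mu p.2) := by
    rw [normSq_mul, normSq_ofReal]
    ring
  constructor
  · refine ⟨(hA.isHermitian.eigenvectorUnitary : Matrix m m ℂ) *
      of (fun i j => lam i * Kt i j / ((lam i + s * mu j : ℝ) : ℂ)) *
      (hB.isHermitian.eigenvectorUnitary : Matrix n n ℂ)ᴴ, ?_⟩
    rw [sylvesterVariational_eq_sum K _ s hA.isHermitian hB.isHermitian, eigenCoords_conj]
    refine Finset.sum_congr rfl fun p _ => ?_
    rw [of_apply, two_mul_re_star_div_mul_sub, hterm]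
  · rintro _ ⟨Z, rfl⟩
    rw [sylvesterVariational_eq_sum K Z s hA.isHermitian hB.isHermitian]
    exact Finset.sum_le_sum fun p _ =>
      (two_mul_re_star_mul_sub_le (hden p) _ _).trans_eq (hterm p).symm

theorem sylvesterInverseForm_eq_sum (K : Matrix m n ℂ) {s : ℝ} (hA : A.PosDef)
    (hB : B.PosSemidef) (hs : 0 ≤ s) :
    sylvesterInverseForm K s A B = ∑ p : m × n,
      hA.isHermitian.eigenvalues p.1 ^ 2 /
          (hA.isHermitian.eigenvalues p.1 + s * hB.isHermitian.eigenvalues p.2) *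
        normSq (eigenCoords hA.isHermitian hB.isHermitian K p.1 p.2) :=
  (isGreatest_range_sylvesterVariational K hA hB hs).isLUB.ciSup_eq

theorem convexOn_sylvesterInverseForm (K : Matrix m n ℂ) {s : ℝ} (hs : 0 ≤ s) :
    ConvexOn ℝ ({A : Matrix m m ℂ | A.PosDef} ×ˢ {B : Matrix n n ℂ | B.PosSemidef})
      (fun p => sylvesterInverseForm K s p.1 p.2) := by
  refine ⟨convex_setOf_posDef.prod convex_setOf_posSemidef, ?_⟩
  rintro ⟨A₁, B₁⟩ ⟨hA₁, hB₁⟩ ⟨A₂, B₂⟩ ⟨hA₂, hB₂⟩ a b ha hb hab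
  have hA : (a • A₁ + b • A₂).PosDef := convex_setOf_posDef hA₁ hA₂ ha hb hab
  have hB : (a • B₁ + b • B₂).PosSemidef := convex_setOf_posSemidef hB₁ hB₂ ha hb hab
  obtain ⟨⟨Z, hZ⟩, -⟩ := isGreatest_range_sylvesterVariational K hA hB hs
  change sylvesterInverseForm K s (a • A₁ + b • A₂) (a • B₁ + b • B₂) ≤
    a * sylvesterInverseForm K s A₁ B₁ + b * sylvesterInverseForm K s A₂ B₂
  rw [sylvesterInverseForm_eq_sum K hA hB hs, ← hZ, sylvesterVariational_smul_add_smul]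
  gcongr
  · exact le_ciSup (isGreatest_range_sylvesterVariational K hA₁ hB₁ hs).bddAbove Z
  · exact le_ciSup (isGreatest_range_sylvesterVariational K hA₂ hB₂ hs).bddAbove Z

noncomputable def relEntropyIntegrand (K : Matrix m n ℂ) (A : Matrix m m ℂ) (B : Matrix n n ℂ)
    (s : ℝ) : ℝ :=
  (1 / (1 + s) - 1 / s) * (Kᴴ * A * K).trace.re + sylvesterInverseForm K s A B / s

theorem relEntropyIntegrand_eq_sum (K : Matrix m n ℂ) (hA : A.PosDef) (hB : B.PosSemidef)
    {s : ℝ} (hs : 0 < s) :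
    relEntropyIntegrand K A B s = ∑ p : m × n,
      entropyKernel (hA.isHermitian.eigenvalues p.1) (hB.isHermitian.eigenvalues p.2) s *
        normSq (eigenCoords hA.isHermitian hB.isHermitian K p.1 p.2) := by
  rw [relEntropyIntegrand, re_trace_conjTranspose_mul_mul_eq_sum K hA.isHermitian hB.isHermitian,
    sylvesterInverseForm_eq_sum K hA hB hs.le, Finset.mul_sum, Finset.sum_div,
    ← Finset.sum_add_distrib]
  refine Finset.sum_congr rfl fun p _ => ?_
  rw [entropyKernel_eq (hA.eigenvalues_pos _) (hB.eigenvalues_nonneg _) hs]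
  ring

theorem convexOn_relEntropyIntegrand (K : Matrix m n ℂ) {s : ℝ} (hs : 0 < s) :
    ConvexOn ℝ ({A : Matrix m m ℂ | A.PosDef} ×ˢ {B : Matrix n n ℂ | B.PosDef})
      (fun p => relEntropyIntegrand K p.1 p.2 s) := by
  have hconv := (convex_setOf_posDef (n := m) (𝕜 := ℂ)).prod (convex_setOf_posDef (n := n) (𝕜 := ℂ))
  have hΦ := (convexOn_sylvesterInverseForm K hs.le).subset
    (prod_mono subset_rfl fun _ hB => hB.posSemidef) hconv
  refine ⟨hconv, fun x hx y hy a b ha hb hab => ?_⟩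
  have hΦxy := div_le_div_of_nonneg_right (hΦ.2 hx hy ha hb hab) hs.le
  simp only [relEntropyIntegrand, Prod.fst_add, Prod.smul_fst, Prod.snd_add, Prod.smul_snd,
    smul_eq_mul, re_trace_conjTranspose_mul_smul_add_smul_mul] at hΦxy ⊢
  rw [add_div, mul_div_assoc, mul_div_assoc] at hΦxy
  linear_combination hΦxy

theorem eqOn_relEntropyIntegrand_sum (K : Matrix m n ℂ) (hA : A.PosDef) (hB : B.PosDef) :
    EqOn (relEntropyIntegrand K A B) (fun s => ∑ p : m × n,
      entropyKernel (hA.isHermitian.eigenvalues p.1) (hB.isHermitian.eigenvalues p.2) s *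
        normSq (eigenCoords hA.isHermitian hB.isHermitian K p.1 p.2)) (Ioi 0) :=
  fun _ hs => relEntropyIntegrand_eq_sum K hA hB.posSemidef hs

theorem integrableOn_relEntropyIntegrand (K : Matrix m n ℂ) (hA : A.PosDef) (hB : B.PosDef) :
    IntegrableOn (relEntropyIntegrand K A B) (Ioi 0) := by
  refine IntegrableOn.congr_fun ?_ (eqOn_relEntropyIntegrand_sum K hA hB).symm measurableSet_Ioi
  exact integrable_finsetSum _ fun p _ =>
    (integrableOn_entropyKernel (hA.eigenvalues_pos p.1) (hB.eigenvalues_pos p.2)).mul_const _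

theorem relEntropyTrace_eq_integral (K : Matrix m n ℂ) (hA : A.PosDef) (hB : B.PosDef) :
    relEntropyTrace K A B = ∫ s in Ioi 0, relEntropyIntegrand K A B s := by
  rw [setIntegral_congr_fun measurableSet_Ioi (eqOn_relEntropyIntegrand_sum K hA hB),
    integral_finsetSum _ fun p _ =>
      (integrableOn_entropyKernel (hA.eigenvalues_pos p.1) (hB.eigenvalues_pos p.2)).mul_const _,
    relEntropyTrace_eq_sum K hA.isHermitian hB.isHermitian]
  refine Finset.sum_congr rfl fun p _ => ?_
  rw [integral_mul_const, integral_entropyKernel (hA.eigenvalues_pos _) (hB.eigenvalues_pos _)]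

theorem convexOn_relEntropyTrace (K : Matrix m n ℂ) :
    ConvexOn ℝ ({A : Matrix m m ℂ | A.PosDef} ×ˢ {B : Matrix n n ℂ | B.PosDef})
      (fun p => relEntropyTrace K p.1 p.2) := by
  have hconv := (convex_setOf_posDef (n := m) (𝕜 := ℂ)).prod (convex_setOf_posDef (n := n) (𝕜 := ℂ))
  refine (convexOn_integral (μ := volume.restrict (Ioi 0))
    (g := fun p s => relEntropyIntegrand K p.1 p.2 s) hconv ?_ fun p hp => ?_).congr fun p hp => ?_
  · exact ae_restrict_of_forall_mem measurableSet_Ioi fun _ hs => convexOn_relEntropyIntegrand K hs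
  · exact integrableOn_relEntropyIntegrand K hp.1 hp.2
  · exact (relEntropyTrace_eq_integral K hp.1 hp.2).symm

end

/-- For a fixed matrix `K`, the map `(A, B) ↦ Tr(K* (A log A) K − K* A K log B)` is
jointly convex on pairs of positive definite matrices.
(The traced expression is real; we take its real part.) -/
theorem jointConvexity_relativeEntropy_K
    {m n : ℕ} (K : Matrix (Fin m) (Fin n) ℂ)
    (A₁ A₂ : Matrix (Fin m) (Fin m) ℂ) (B₁ B₂ : Matrix (Fin n) (Fin n) ℂ)
    (hA₁ : A₁.PosDef) (hA₂ : A₂.PosDef) (hB₁ : B₁.PosDef) (hB₂ : B₂.PosDef)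
    (t : ℝ) (ht0 : 0 ≤ t) (ht1 : t ≤ 1) :
    (Kᴴ * matFun (fun x => x * Real.log x) (t • A₁ + (1 - t) • A₂) * K
        - Kᴴ * (t • A₁ + (1 - t) • A₂) * K *
            matFun Real.log (t • B₁ + (1 - t) • B₂)).trace.re
      ≤ t * (Kᴴ * matFun (fun x => x * Real.log x) A₁ * K
              - Kᴴ * A₁ * K * matFun Real.log B₁).trace.re
        + (1 - t) * (Kᴴ * matFun (fun x => x * Real.log x) A₂ * K
              - Kᴴ * A₂ * K * matFun Real.log B₂).trace.re :=
  (convexOn_relEntropyTrace K).2 (x := (A₁, B₁)) ⟨hA₁, hB₁⟩ (y := (A₂, B₂)) ⟨hA₂, hB₂⟩ ht0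
    (sub_nonneg.2 ht1) (add_sub_cancel t 1)
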